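/- arXiv:2005.12255 — 2 statements merged into one kernel-verified Lean document; each statement's English description precedes it below -/
import Mathlib

section
/- Let G be a finite bipartite graph with parts A and B that is biregular with degrees (a,b). Let λ₃ be the operator norm of the adjacency matrix A(G) restricted to the subspace W of real vectors indexed by A ∪ B that are orthogonal to both indicator vectors 1_A and 1_B. Then for all X ⊆ A and Y ⊆ B, the number e(X,Y) of edges between X and Y satisfies |e(X,Y) − (a/|B|)·|X||Y|| ≤ λ₃ · √(|X||Y|). -/
/-!
Put `d = |Y| / |B|`. The vector `w = 1_Y - d • 1_B` lies in `W` and `‖w‖ ≤ √|Y|`, since centring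
a vector does not increase its norm. As every vertex of `A` has degree `a`,
`⟪1_X, A(G) w⟫ = e(X, Y) - a d |X|`, and Cauchy–Schwarz with `‖A(G) w‖ ≤ λ₃ ‖w‖` bounds this by
`√|X| λ₃ √|Y|`.
-/

open Matrix
open scoped Classical

def biAdj {A B : Type} (r : A → B → Prop) : (A ⊕ B) → (A ⊕ B) → Prop
  | Sum.inl x, Sum.inr y => r x y
  | Sum.inr y, Sum.inl x => r x y
  | _, _ => False

noncomputable def adjMat {A B : Type} [Fintype A] [Fintype B] (r : A → B → Prop) :
    Matrix (A ⊕ B) (A ⊕ B) ℝ :=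
  Matrix.of fun i j => if biAdj r i j then (1 : ℝ) else 0

theorem Set.ncard_eq_sum_boole {ι R : Type*} [Fintype ι] [AddCommMonoidWithOne R]
    (s : Set ι) [DecidablePred (· ∈ s)] : (s.ncard : R) = ∑ i, if i ∈ s then 1 else 0 := by
  simp [Set.ncard_eq_toFinset_card']

theorem Fintype.sum_sub_average {ι : Type*} [Fintype ι] (f : ι → ℝ) :
    ∑ i, (f i - (∑ j, f j) / Fintype.card ι) = 0 := by
  rcases isEmpty_or_nonempty ι with hι | hι
  · simp
  rw [Finset.sum_sub_distrib, Finset.sum_const, Finset.card_univ, nsmul_eq_mul,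
    mul_div_cancel₀ _ (by positivity), sub_self]

theorem Fintype.sum_sub_average_sq_le {ι : Type*} [Fintype ι] (f : ι → ℝ) :
    ∑ i, (f i - (∑ j, f j) / Fintype.card ι) ^ 2 ≤ ∑ i, f i ^ 2 := by
  set m := (∑ j, f j) / Fintype.card ι
  have hexp : ∑ i, (f i - m) ^ 2 = ∑ i, f i ^ 2 - m * (2 * ∑ j, f j - Fintype.card ι * m) := by
    simp only [sub_sq, Finset.sum_add_distrib, Finset.sum_sub_distrib, Finset.sum_const,
      Finset.card_univ, nsmul_eq_mul, ← Finset.sum_mul, ← Finset.mul_sum]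
    ring
  rcases (Fintype.card ι).eq_zero_or_pos with h | h
  · simp [m, h]
  have hcard : (Fintype.card ι : ℝ) * m = ∑ j, f j := by simp only [m]; field_simp
  rw [hexp, hcard]
  have hnonneg : 0 ≤ m * ∑ j, f j := by
    rw [show m * ∑ j, f j = (∑ j, f j) ^ 2 / Fintype.card ι by ring]
    positivity
  linarith

theorem ContinuousLinearMap.norm_apply_le_sSup_mul {E F : Type*} [NormedAddCommGroup E]
    [NormedSpace ℝ E] [SeminormedAddCommGroup F] [NormedSpace ℝ F] (f : E →L[ℝ] F)
    (W : Submodule ℝ E) {v : E} (hv : v ∈ W) :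
    ‖f v‖ ≤ sSup {c | ∃ w ∈ W, ‖w‖ ≤ 1 ∧ c = ‖f w‖} * ‖v‖ := by
  rcases eq_or_ne v 0 with rfl | hv0
  · simp
  have hbdd : BddAbove {c | ∃ w ∈ W, ‖w‖ ≤ 1 ∧ c = ‖f w‖} := by
    refine ⟨‖f‖, ?_⟩
    rintro _ ⟨w, -, hw, rfl⟩
    exact f.le_of_opNorm_le_of_le le_rfl hw |>.trans_eq (mul_one _)
  have hunit : ‖v‖⁻¹ • v ∈ W ∧ ‖‖v‖⁻¹ • v‖ ≤ 1 :=
    ⟨W.smul_mem _ hv, by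
      rw [norm_smul, norm_inv, norm_norm, inv_mul_cancel₀ (norm_ne_zero_iff.mpr hv0)]⟩
  have := le_csSup hbdd ⟨_, hunit.1, hunit.2, rfl⟩
  rw [map_smul, norm_smul, norm_inv, norm_norm] at this
  rwa [inv_mul_le_iff₀ (norm_pos_iff.mpr hv0), mul_comm] at this

theorem ContinuousLinearMap.norm_apply_le_sSup_mul_of_norm_le {E F : Type*}
    [NormedAddCommGroup E] [NormedSpace ℝ E] [SeminormedAddCommGroup F] [NormedSpace ℝ F]
    (f : E →L[ℝ] F) (W : Submodule ℝ E) {v : E} (hv : v ∈ W) {R : ℝ} (hR : ‖v‖ ≤ R) :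
    ‖f v‖ ≤ sSup {c | ∃ w ∈ W, ‖w‖ ≤ 1 ∧ c = ‖f w‖} * R := by
  have hnonneg : 0 ≤ sSup {c | ∃ w ∈ W, ‖w‖ ≤ 1 ∧ c = ‖f w‖} :=
    Real.sSup_nonneg fun _ ⟨_, _, _, hc⟩ => hc ▸ norm_nonneg _
  exact (f.norm_apply_le_sSup_mul W hv).trans (mul_le_mul_of_nonneg_left hR hnonneg)

section
variable {A B : Type} [Fintype A] [Fintype B]

variable (A B) in
/-- The subspace `W`: vectors orthogonal to `1_A` and to `1_B`. -/
noncomputable def zeroSumOnParts : Submodule ℝ (EuclideanSpace ℝ (A ⊕ B)) where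
  carrier := {v | ∑ x, v (Sum.inl x) = 0 ∧ ∑ y, v (Sum.inr y) = 0}
  add_mem' := by
    rintro v w ⟨hvA, hvB⟩ ⟨hwA, hwB⟩
    simp [Finset.sum_add_distrib, hvA, hvB, hwA, hwB]
  zero_mem' := by simp
  smul_mem' := by
    rintro t v ⟨hvA, hvB⟩
    simp [← Finset.mul_sum, hvA, hvB]

theorem setOf_sqrt_sum_sq_mulVec_eq (M : Matrix (A ⊕ B) (A ⊕ B) ℝ) :
    {c : ℝ | ∃ v : (A ⊕ B) → ℝ,
        (∑ x : A, v (Sum.inl x)) = 0 ∧ (∑ y : B, v (Sum.inr y)) = 0 ∧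
        Real.sqrt (∑ i, v i ^ 2) ≤ 1 ∧ c = Real.sqrt (∑ i, (M.mulVec v) i ^ 2)} =
      {c | ∃ w ∈ zeroSumOnParts A B, ‖w‖ ≤ 1 ∧ c = ‖toEuclideanCLM (𝕜 := ℝ) M w‖} := by
  ext c
  constructor
  · rintro ⟨v, hA, hB, hv, rfl⟩
    exact ⟨WithLp.toLp 2 v, ⟨hA, hB⟩, by simpa [EuclideanSpace.norm_eq] using hv,
      by simp [EuclideanSpace.norm_eq]⟩
  · rintro ⟨w, ⟨hA, hB⟩, hw, rfl⟩
    exact ⟨w.ofLp, hA, hB, by simpa [EuclideanSpace.norm_eq] using hw,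
      by simp [EuclideanSpace.norm_eq]⟩

theorem adjMat_inl_inl (r : A → B → Prop) (x x' : A) :
    adjMat r (Sum.inl x) (Sum.inl x') = 0 :=
  if_neg id

theorem adjMat_inl_inr (r : A → B → Prop) (x : A) (y : B) :
    adjMat r (Sum.inl x) (Sum.inr y) = if r x y then 1 else 0 :=
  rfl

theorem adjMat_mulVec_inl (r : A → B → Prop) (v : A ⊕ B → ℝ) (x : A) :
    (adjMat r *ᵥ v) (Sum.inl x) = ∑ y, if r x y then v (Sum.inr y) else 0 := by
  simp [mulVec, dotProduct, Fintype.sum_sum_type, adjMat_inl_inl, adjMat_inl_inr]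

noncomputable def indicatorInl (X : Set A) : EuclideanSpace ℝ (A ⊕ B) :=
  WithLp.toLp 2 (Sum.elim (fun x => if x ∈ X then 1 else 0) 0)

noncomputable def centeredIndicatorInr (Y : Set B) : EuclideanSpace ℝ (A ⊕ B) :=
  WithLp.toLp 2 (Sum.elim 0 (fun y => (if y ∈ Y then 1 else 0) - Y.ncard / Fintype.card B))

theorem norm_indicatorInl (X : Set A) :
    ‖(indicatorInl X : EuclideanSpace ℝ (A ⊕ B))‖ = √X.ncard := by
  rw [EuclideanSpace.norm_eq, X.ncard_eq_sum_boole, Fintype.sum_sum_type]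
  simp [indicatorInl]

theorem centeredIndicatorInr_mem (Y : Set B) :
    (centeredIndicatorInr Y : EuclideanSpace ℝ (A ⊕ B)) ∈ zeroSumOnParts A B := by
  refine ⟨by simp [centeredIndicatorInr], ?_⟩
  simp only [centeredIndicatorInr, Sum.elim_inr, Y.ncard_eq_sum_boole]
  exact Fintype.sum_sub_average _

open scoped RealInnerProductSpace in
theorem inner_indicatorInl_adjMat_centeredIndicatorInr {r : A → B → Prop} {a : ℕ}
    (hA : ∀ x : A, {y : B | r x y}.ncard = a) (X : Set A) (Y : Set B) :
    ⟪indicatorInl X, toEuclideanCLM (𝕜 := ℝ) (adjMat r) (centeredIndicatorInr Y)⟫ =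
      ({p : A × B | p.1 ∈ X ∧ p.2 ∈ Y ∧ r p.1 p.2}.ncard : ℝ) -
        (a : ℝ) / (Fintype.card B : ℝ) * (X.ncard : ℝ) * (Y.ncard : ℝ) := by
  have hrow (x : A) :
      ∑ y, (if r x y then (if y ∈ Y then 1 else 0) - (Y.ncard : ℝ) / Fintype.card B else 0) =
        ∑ y, (if y ∈ Y ∧ r x y then (1 : ℝ) else 0) - Y.ncard / Fintype.card B * a := by
    rw [← hA x, Set.ncard_eq_sum_boole {y | r x y}, Finset.mul_sum, ← Finset.sum_sub_distrib]
    refine Finset.sum_congr rfl fun y _ => ?_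
    by_cases hy : y ∈ Y <;> by_cases hxy : r x y <;> simp [hy, hxy]
  rw [inner_toEuclideanCLM, Set.ncard_eq_sum_boole, Fintype.sum_prod_type, X.ncard_eq_sum_boole,
    Finset.mul_sum, Finset.sum_mul, ← Finset.sum_sub_distrib]
  simp only [dotProduct, Fintype.sum_sum_type, indicatorInl, centeredIndicatorInr,
    adjMat_mulVec_inl, Sum.elim_inl, Sum.elim_inr, Pi.zero_apply, zero_mul,
    Finset.sum_const_zero, add_zero, Set.mem_ofPred_eq, hrow]
  refine Finset.sum_congr rfl fun x _ => ?_
  by_cases hx : x ∈ X <;> simp [hx]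
  ring

theorem norm_centeredIndicatorInr_le (Y : Set B) :
    ‖(centeredIndicatorInr Y : EuclideanSpace ℝ (A ⊕ B))‖ ≤ √Y.ncard := by
  rw [EuclideanSpace.norm_eq, Fintype.sum_sum_type]
  apply Real.sqrt_le_sqrt
  have := Fintype.sum_sub_average_sq_le (fun y => if y ∈ Y then (1 : ℝ) else 0)
  rw [← Y.ncard_eq_sum_boole] at this
  simpa [centeredIndicatorInr, Y.ncard_eq_sum_boole (R := ℝ)] using this

end

theorem bipartite_expander_mixing_general {A B : Type} [Fintype A] [Fintype B]
    (r : A → B → Prop) (a : ℕ)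
    (hA : ∀ x : A, {y : B | r x y}.ncard = a)
    (lam3 : ℝ)
    (hlam3 : lam3 = sSup {c : ℝ | ∃ v : (A ⊕ B) → ℝ,
        (∑ x : A, v (Sum.inl x)) = 0 ∧ (∑ y : B, v (Sum.inr y)) = 0 ∧
        Real.sqrt (∑ i, v i ^ 2) ≤ 1 ∧
        c = Real.sqrt (∑ i, ((adjMat r).mulVec v) i ^ 2)})
    (X : Set A) (Y : Set B) :
    |({p : A × B | p.1 ∈ X ∧ p.2 ∈ Y ∧ r p.1 p.2}.ncard : ℝ) -
        (a : ℝ) / (Fintype.card B : ℝ) * (X.ncard : ℝ) * (Y.ncard : ℝ)| ≤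
      lam3 * Real.sqrt ((X.ncard : ℝ) * (Y.ncard : ℝ)) := by
  rw [setOf_sqrt_sum_sq_mulVec_eq] at hlam3
  rw [← inner_indicatorInl_adjMat_centeredIndicatorInr hA, Real.sqrt_mul (Nat.cast_nonneg _)]
  calc _ ≤ ‖indicatorInl X‖ * ‖toEuclideanCLM (𝕜 := ℝ) (adjMat r) (centeredIndicatorInr Y)‖ :=
        abs_real_inner_le_norm _ _
    _ ≤ √X.ncard * (lam3 * √Y.ncard) := by
        rw [norm_indicatorInl, hlam3]
        gcongr
        exact ContinuousLinearMap.norm_apply_le_sSup_mul_of_norm_le _ _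
          (centeredIndicatorInr_mem Y) (norm_centeredIndicatorInr_le Y)
    _ = lam3 * (√X.ncard * √Y.ncard) := by ring

/-- expander mixing lemma for biregular bipartite graphs.
`lam3` is the operator norm of the adjacency matrix restricted to the subspace of
vectors orthogonal to the indicator vectors `1_A` and `1_B`, realized as the
supremum of `‖A(G)·v‖` over vectors `v` in that subspace of Euclidean norm at most 1. -/
theorem bipartite_expander_mixing {A B : Type} [Fintype A] [Fintype B]
    (r : A → B → Prop) (a b : ℕ)
    (hA : ∀ x : A, {y : B | r x y}.ncard = a)
    (hB : ∀ y : B, {x : A | r x y}.ncard = b)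
    (lam3 : ℝ)
    (hlam3 : lam3 = sSup {c : ℝ | ∃ v : (A ⊕ B) → ℝ,
        (∑ x : A, v (Sum.inl x)) = 0 ∧ (∑ y : B, v (Sum.inr y)) = 0 ∧
        Real.sqrt (∑ i, v i ^ 2) ≤ 1 ∧
        c = Real.sqrt (∑ i, ((adjMat r).mulVec v) i ^ 2)})
    (X : Set A) (Y : Set B) :
    |({p : A × B | p.1 ∈ X ∧ p.2 ∈ Y ∧ r p.1 p.2}.ncard : ℝ) -
        (a : ℝ) / (Fintype.card B : ℝ) * (X.ncard : ℝ) * (Y.ncard : ℝ)| ≤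
      lam3 * Real.sqrt ((X.ncard : ℝ) * (Y.ncard : ℝ)) :=
  bipartite_expander_mixing_general r a hA lam3 hlam3 X Y
end

section
/- Let q be an odd prime power, let k, h, n be integers with 0 < k < h ≤ n, and let K be a dot_k-subspace of (𝔽_q^n, dot_n). Let K^⊥ be the orthogonal complement of K with respect to the bilinear form of dot_n, so that 𝔽_q^n = K ⊕ K^⊥. Then the map W ↦ K ⊕ W is a bijection from the set of subspaces W ⊆ K^⊥ that are dot_{h−k}-subspaces of (𝔽_q^n, dot_n) onto the set of dot_h-subspaces of (𝔽_q^n, dot_n) containing K. -/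
open Module

/-- The quadratic form `x₁² + ⋯ + x_m²` on `F^m`. -/
noncomputable def dotForm (F : Type) [Field F] (m : ℕ) : QuadraticForm F (Fin m → F) :=
  QuadraticMap.weightedSumSquares F (fun _ : Fin m => (1 : F))

/-- The restriction of `dotForm F n` to a linear subspace `W ⊆ F^n`. -/
noncomputable def restForm (F : Type) [Field F] (n : ℕ) (W : Submodule F (Fin n → F)) :
    QuadraticForm F W :=
  (dotForm F n).comp W.subtype

/-- `W` is a dot_k-subspace of `(F^n, dot_n)`: the restricted form is isometrically
isomorphic to `dot_k`. -/
def IsDotSub (F : Type) [Field F] (n k : ℕ) (W : Submodule F (Fin n → F)) : Prop :=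
  Nonempty (QuadraticMap.IsometryEquiv (restForm F n W) (dotForm F k))

/-!
Over a finite field of odd characteristic, a diagonal form whose weights multiply to a nonzero
square is isometric to `dot_m`: merge the last two weights `a, b` into `ab, 1` (possible since
`ax² + by² = 1` is solvable) and induct. Consequently `dot_k ⊥ Q ≅ dot_h` forces `Q ≅ dot_{h-k}`,
by diagonalizing `Q` and comparing discriminants.

Since `K ≅ dot_k` has nondegenerate polar form, `F^n = K ⊕ K^⊥`, and for `W ≤ K^⊥` the sum
`K ⊔ W` is isometric to `K ⊥ W`; so `K ⊔ W ≅ dot_h` iff `W ≅ dot_{h-k}`. The bijection is then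
the modular-lattice correspondence `W ↦ K ⊔ W`, `H ↦ H ⊓ K^⊥`.
-/

open QuadraticMap

section CommSemiring

variable {R : Type*} [CommSemiring R]

def QuadraticMap.weightedSumSquaresAppend {m l : ℕ} (u : Fin m → R) (v : Fin l → R) :
    ((weightedSumSquares R u).prod (weightedSumSquares R v)).IsometryEquiv
      (weightedSumSquares R (Fin.append u v)) where
  __ := Fin.appendEquiv m l
  map_add' x y := by
    funext i
    refine Fin.addCases (fun j => ?_) (fun j => ?_) i <;> simp
  map_smul' c x := by
    funext i
    refine Fin.addCases (fun j => ?_) (fun j => ?_) i <;> simp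
  map_app' x := by
    simp [weightedSumSquares_apply, Fin.sum_univ_add]

theorem QuadraticMap.Equivalent.weightedSumSquares_append {m l : ℕ} {u u' : Fin m → R}
    {v v' : Fin l → R} (hu : (weightedSumSquares R u).Equivalent (weightedSumSquares R u'))
    (hv : (weightedSumSquares R v).Equivalent (weightedSumSquares R v')) :
    (weightedSumSquares R (Fin.append u v)).Equivalent
      (weightedSumSquares R (Fin.append u' v')) :=
  (Equivalent.trans ⟨(weightedSumSquaresAppend u v).symm⟩ (hu.prod hv)).trans
    ⟨weightedSumSquaresAppend u' v'⟩

end CommSemiring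

section CommRing

variable {R : Type*} [CommRing R]

theorem QuadraticMap.polar_weightedSumSquares {ι : Type*} [Fintype ι] (w x y : ι → R) :
    polar (weightedSumSquares R w) x y = ∑ i, 2 * w i * x i * y i := by
  simp only [polar, weightedSumSquares_apply, smul_eq_mul, Pi.add_apply,
    ← Finset.sum_sub_distrib]
  exact Finset.sum_congr rfl fun i _ => by ring

open Matrix in
/-- The witness is `p ↦ (-by p₀ + x p₁, ax p₀ + y p₁)`, of determinant `-1`, using
`a(-by p₀ + x p₁)² + b(ax p₀ + y p₁)² = (ax² + by²)(ab p₀² + p₁²)`. -/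
theorem QuadraticMap.equivalent_weightedSumSquares_pair {a b x y : R}
    (h : a * x ^ 2 + b * y ^ 2 = 1) :
    (weightedSumSquares R ![a * b, 1]).Equivalent (weightedSumSquares R ![a, b]) := by
  let M : Matrix (Fin 2) (Fin 2) R := !![-(b * y), x; a * x, y]
  let N : Matrix (Fin 2) (Fin 2) R := !![-y, x; a * x, b * y]
  have hinv : M * N = 1 ∧ N * M = 1 := by
    constructor <;> ext i j <;> fin_cases i <;> fin_cases j <;>
      simp [M, N, mul_apply, Fin.sum_univ_two] <;> first | ring1 | linear_combination h
  refine ⟨{ M.toLinearEquiv' ⟨N, hinv.2, hinv.1⟩ with map_app' := fun p => ?_ }⟩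
  simp [weightedSumSquares_apply, M, vecHead, vecTail]
  linear_combination (a * b * p 0 ^ 2 + p 1 ^ 2) * h

end CommRing

theorem Fin.append_const {α : Type*} {m n : ℕ} (c : α) :
    Fin.append (fun _ : Fin m => c) (fun _ : Fin n => c) = fun _ => c := by
  funext i
  refine Fin.addCases (fun j => ?_) (fun j => ?_) i <;> simp

theorem dotForm_add_equivalent (F : Type) [Field F] (k l : ℕ) :
    ((dotForm F k).prod (dotForm F l)).Equivalent (dotForm F (k + l)) :=
  ⟨(weightedSumSquaresAppend _ _).trans
    (QuadraticForm.weightedSumSquaresCongr (Fin.append_const 1))⟩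

theorem FiniteField.exists_mul_sq_add_mul_sq_eq_one {F : Type*} [Field F] [Fintype F]
    (hF : ringChar F ≠ 2) {a b : F} (ha : a ≠ 0) (hb : b ≠ 0) :
    ∃ x y : F, a * x ^ 2 + b * y ^ 2 = 1 := by
  open Polynomial in
  obtain ⟨x, y, hxy⟩ := FiniteField.exists_root_sum_quadratic
    (f := C a * X ^ 2) (g := C b * X ^ 2 - C 1) (degree_C_mul_X_pow 2 ha)
    (by rw [degree_sub_C (by rw [degree_C_mul_X_pow 2 hb]; norm_num), degree_C_mul_X_pow 2 hb]; rfl)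
    (FiniteField.odd_card_of_char_ne_two hF)
  exact ⟨x, y, by simp at hxy; linear_combination hxy⟩

theorem FiniteField.weightedSumSquares_equivalent_dotForm {F : Type} [Field F] [Fintype F]
    (hF : ringChar F ≠ 2) : ∀ {m : ℕ} (w : Fin m → F) (u : Fˣ), ∏ i, w i = u ^ 2 →
      (weightedSumSquares F w).Equivalent (dotForm F m)
  | 0, w, _, _ => ⟨QuadraticForm.weightedSumSquaresCongr (Subsingleton.elim _ _)⟩
  | 1, w, u, hw => by
    refine ⟨QuadraticForm.isometryEquivWeightedSumSquaresWeightedSumSquares (fun _ => u) ?_⟩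
    intro i
    rw [Subsingleton.elim i 0, one_mul, ← hw, Fin.prod_univ_one]
  | m + 2, w, u, hw => by
    set v : Fin m → F := fun i => w (Fin.castAdd 2 i)
    set a := w (Fin.natAdd m 0)
    set b := w (Fin.natAdd m 1)
    have hw_eq : w = Fin.append v ![a, b] := by
      rw [← Fin.append_castAdd_natAdd (f := w)]
      congr 1
      funext j
      fin_cases j <;> rfl
    have hw_ne : ∀ i, w i ≠ 0 := fun i =>
      Finset.prod_ne_zero_iff.mp (hw ▸ pow_ne_zero 2 u.ne_zero) i (Finset.mem_univ i)
    obtain ⟨x, y, hxy⟩ := exists_mul_sq_add_mul_sq_eq_one hF (hw_ne (Fin.natAdd m 0))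
      (hw_ne (Fin.natAdd m 1))
    have hsplit : Fin.append v ![a * b, 1] =
        Fin.append (Fin.append v ![a * b]) (fun _ : Fin 1 => 1) := by
      rw [Fin.append_right_eq_snoc (Fin.append v ![a * b]), ← Fin.append_snoc]
      congr 1
      funext j
      fin_cases j <;> rfl
    have hprod : ∏ i, Fin.append v ![a * b] i = u ^ 2 := by
      rw [← hw, hw_eq, Fin.prod_univ_add, Fin.prod_univ_add]
      simp
    have hdot : dotForm F (m + 2) = weightedSumSquares F
        (Fin.append (fun _ : Fin (m + 1) => (1 : F)) (fun _ : Fin 1 => 1)) := by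
      rw [Fin.append_const]; rfl
    rw [hw_eq, hdot]
    refine (Equivalent.weightedSumSquares_append (.refl _)
      (equivalent_weightedSumSquares_pair hxy).symm).trans ?_
    rw [hsplit]
    exact .weightedSumSquares_append (weightedSumSquares_equivalent_dotForm hF _ u hprod) (.refl _)

section Discriminant

open QuadraticForm

variable {R : Type*} [CommRing R] [Invertible (2 : R)] {n : Type*} [Fintype n] [DecidableEq n]

theorem QuadraticForm.toMatrix'_weightedSumSquares (w : n → R) :
    QuadraticForm.toMatrix' (weightedSumSquares R w) = Matrix.diagonal w := by
  ext i j
  rw [toMatrix', LinearMap.toMatrix₂'_apply, associated_apply, ← polar,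
    polar_weightedSumSquares]
  rcases eq_or_ne i j with rfl | hij
  · simp [Pi.single_apply]
  · simp [Pi.single_apply, hij, hij.symm]

theorem QuadraticForm.discr'_weightedSumSquares (w : n → R) :
    QuadraticForm.discr' (weightedSumSquares R w) = ∏ i, w i := by
  rw [discr', toMatrix'_weightedSumSquares, Matrix.det_diagonal]

theorem QuadraticMap.Equivalent.exists_discr'_eq_mul_sq {Q₁ Q₂ : QuadraticForm R (n → R)}
    (h : Q₁.Equivalent Q₂) : ∃ u : Rˣ, Q₁.discr' = u ^ 2 * Q₂.discr' := by
  obtain ⟨f⟩ := h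
  have hdiscr := discr'_comp (Q := Q₂) (f.toLinearEquiv : (n → R) →ₗ[R] n → R)
  rw [show Q₂.comp (f.toLinearEquiv : (n → R) →ₗ[R] n → R) = Q₁ from ext f.map_app,
    LinearMap.det_toMatrix'] at hdiscr
  exact ⟨f.toLinearEquiv.isUnit_det'.unit, by rw [hdiscr, IsUnit.unit_spec]; ring⟩

end Discriminant

theorem FiniteField.equivalent_dotForm_of_dotForm_prod_equivalent {F : Type} [Field F]
    [Fintype F] (hF : ringChar F ≠ 2) {V : Type*} [AddCommGroup V] [Module F V]
    [FiniteDimensional F V] {Q : QuadraticForm F V} {k h : ℕ}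
    (hQ : ((dotForm F k).prod Q).Equivalent (dotForm F h)) :
    Q.Equivalent (dotForm F (h - k)) := by
  have : Invertible (2 : F) := invertibleOfNonzero (Ring.two_ne_zero hF)
  obtain ⟨w, hw⟩ := Q.equivalent_weightedSumSquares
  obtain rfl : h = k + Module.finrank F V := by
    obtain ⟨e⟩ := hQ
    simpa using e.toLinearEquiv.finrank_eq.symm
  have hsum : (weightedSumSquares F (Fin.append (fun _ : Fin k => (1 : F)) w)).Equivalent
      (dotForm F (k + Module.finrank F V)) :=
    (Equivalent.trans ⟨(weightedSumSquaresAppend _ _).symm⟩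
      ((Equivalent.refl _).prod hw.symm)).trans hQ
  obtain ⟨u, hu⟩ := hsum.exists_discr'_eq_mul_sq
  rw [dotForm, QuadraticForm.discr'_weightedSumSquares, QuadraticForm.discr'_weightedSumSquares,
    Fin.prod_univ_add] at hu
  rw [Nat.add_sub_cancel_left]
  exact hw.trans (weightedSumSquares_equivalent_dotForm hF w u (by simpa using hu))

section Orthogonal

open LinearMap

theorem QuadraticMap.equivalent_prod_comp_subtype_sup {R M : Type*} [CommRing R]
    [AddCommGroup M] [Module R M] (Q : QuadraticForm R M) {K W : Submodule R M}
    (hKW : Disjoint K W) (horth : W ≤ BilinForm.orthogonal (polarBilin Q) K) :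
    ((Q.comp K.subtype).prod (Q.comp W.subtype)).Equivalent (Q.comp (K ⊔ W).subtype) := by
  have hinj : ker (K.subtype.coprod W.subtype) = ⊥ := by
    rw [ker_coprod_of_disjoint_range, Submodule.ker_subtype, Submodule.ker_subtype,
      Submodule.prod_bot]
    rwa [Submodule.range_subtype, Submodule.range_subtype]
  let e := (LinearEquiv.ofInjective _ (ker_eq_bot.mp hinj)).trans (LinearEquiv.ofEq _ _
    (by rw [range_coprod, Submodule.range_subtype, Submodule.range_subtype]))
  exact ⟨{ e with map_app' := fun p => isOrtho_polarBilin.mp (horth p.2.2 p.1 p.1.2) }⟩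

theorem QuadraticMap.Equivalent.separatingLeft_polarBilin {R M₁ M₂ N : Type*} [CommRing R]
    [AddCommGroup M₁] [Module R M₁] [AddCommGroup M₂] [Module R M₂] [AddCommGroup N]
    [Module R N] {Q₁ : QuadraticMap R M₁ N} {Q₂ : QuadraticMap R M₂ N} (h : Q₁.Equivalent Q₂)
    (h₂ : (polarBilin Q₂).SeparatingLeft) : (polarBilin Q₁).SeparatingLeft := by
  obtain ⟨f⟩ := h
  intro x hx
  rw [← f.toLinearEquiv.map_eq_zero_iff]
  refine h₂ (f x) fun y => ?_
  obtain ⟨y, rfl⟩ := f.toLinearEquiv.surjective y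
  simpa [polar, ← map_add, f.map_app] using hx y

theorem QuadraticMap.separatingLeft_polarBilin_weightedSumSquares {K ι : Type*} [Field K]
    [Fintype ι] [DecidableEq ι] (h2 : (2 : K) ≠ 0) {w : ι → K} (hw : ∀ i, w i ≠ 0) :
    (polarBilin (weightedSumSquares K w)).SeparatingLeft := by
  intro x hx
  funext i
  simpa [polar_weightedSumSquares, Pi.single_apply, h2, hw] using hx (Pi.single i 1)

theorem isCompl_orthogonal_of_isDotSub {F : Type} [Field F] (h2 : (2 : F) ≠ 0) {n k : ℕ}
    {K : Submodule F (Fin n → F)} (hK : IsDotSub F n k K) :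
    IsCompl K (BilinForm.orthogonal (polarBilin (dotForm F n)) K) := by
  refine BilinForm.isCompl_orthogonal_of_restrict_nondegenerate
    (fun x y hxy => by rwa [polarBilin_apply_apply, polar_comm, ← polarBilin_apply_apply])
    (.ofSeparatingLeft ?_)
  have := Equivalent.separatingLeft_polarBilin hK
    (separatingLeft_polarBilin_weightedSumSquares h2 fun _ => one_ne_zero)
  rwa [restForm, polarBilin_comp] at this

end Orthogonal

theorem IsCompl.bijOn_sup {α : Type*} [Lattice α] [BoundedOrder α] [IsModularLattice α]
    {K L : α} (hKL : IsCompl K L) {P Q : α → Prop} (hPQ : ∀ W ≤ L, (P W ↔ Q (K ⊔ W))) :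
    Set.BijOn (K ⊔ ·) {W | W ≤ L ∧ P W} {H | Q H ∧ K ≤ H} := by
  have sup_inf_eq : ∀ W ≤ L, (K ⊔ W) ⊓ L = W := fun W hW => by
    rw [sup_comm, sup_inf_assoc_of_le K hW, hKL.inf_eq_bot, sup_bot_eq]
  have sup_inf_eq_of_le : ∀ H, K ≤ H → K ⊔ H ⊓ L = H := fun H hKH => by
    rw [inf_comm, ← sup_inf_assoc_of_le L hKH, hKL.sup_eq_top, top_inf_eq]
  refine ⟨fun W ⟨hW, hP⟩ => ⟨(hPQ W hW).mp hP, le_sup_left⟩, ?_, ?_⟩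
  · rintro W₁ ⟨hW₁, -⟩ W₂ ⟨hW₂, -⟩ heq
    rw [← sup_inf_eq W₁ hW₁, ← sup_inf_eq W₂ hW₂]
    exact congrArg (· ⊓ L) heq
  · rintro H ⟨hQ, hKH⟩
    refine ⟨H ⊓ L, ⟨inf_le_right, (hPQ _ inf_le_right).mpr ?_⟩, sup_inf_eq_of_le H hKH⟩
    rwa [sup_inf_eq_of_le H hKH]

theorem isDotSub_iff_isDotSub_sup {F : Type} [Field F] [Fintype F] (hF : ringChar F ≠ 2)
    {n k h : ℕ} (hkh : k ≤ h) {K W : Submodule F (Fin n → F)} (hK : IsDotSub F n k K)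
    (hW : W ≤ LinearMap.BilinForm.orthogonal (polarBilin (dotForm F n)) K) :
    IsDotSub F n (h - k) W ↔ IsDotSub F n h (K ⊔ W) := by
  have hsum := equivalent_prod_comp_subtype_sup (dotForm F n)
    ((isCompl_orthogonal_of_isDotSub (Ring.two_ne_zero hF) hK).disjoint.mono_right hW) hW
  constructor
  · intro hW'
    have hdot := dotForm_add_equivalent F k (h - k)
    rw [Nat.add_sub_cancel' hkh] at hdot
    exact (hsum.symm.trans (Equivalent.prod hK hW')).trans hdot
  · intro hKW
    exact FiniteField.equivalent_dotForm_of_dotForm_prod_equivalent hF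
      (((Equivalent.prod hK (.refl _)).symm.trans hsum).trans hKW)

theorem dot_h_containing_dot_k_bijection_general (n k h : ℕ) (hkh : k < h)
    (F : Type) [Field F] [Fintype F] (hq : Odd (Fintype.card F))
    (K : Submodule F (Fin n → F)) (hK : IsDotSub F n k K) :
    IsCompl K (LinearMap.BilinForm.orthogonal (QuadraticMap.polarBilin (dotForm F n)) K) ∧
      Set.BijOn (fun W => K ⊔ W)
        {W : Submodule F (Fin n → F) |
          W ≤ LinearMap.BilinForm.orthogonal (QuadraticMap.polarBilin (dotForm F n)) K ∧ IsDotSub F n (h - k) W}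
        {H : Submodule F (Fin n → F) | IsDotSub F n h H ∧ K ≤ H} := by
  have hF : ringChar F ≠ 2 := fun hF => by
    have := FiniteField.even_card_iff_char_two.mp hF
    rw [Nat.odd_iff] at hq
    omega
  have hcompl := isCompl_orthogonal_of_isDotSub (Ring.two_ne_zero hF) hK
  exact ⟨hcompl, hcompl.bijOn_sup fun W hW => isDotSub_iff_isDotSub_sup hF hkh.le hK hW⟩

/-- For a dot_k-subspace `K` of `(F_q^n, dot_n)` with orthogonal
complement `K^⊥` (with respect to the bilinear form of `dot_n`), we have
`F_q^n = K ⊕ K^⊥`, and `W ↦ K ⊕ W` is a bijection from the dot_{h−k}-subspaces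
contained in `K^⊥` onto the dot_h-subspaces containing `K`. -/
theorem dot_h_containing_dot_k_bijection (n k h : ℕ) (hk : 0 < k) (hkh : k < h) (hhn : h ≤ n)
    (F : Type) [Field F] [Fintype F] (hq : Odd (Fintype.card F))
    (K : Submodule F (Fin n → F)) (hK : IsDotSub F n k K) :
    IsCompl K (LinearMap.BilinForm.orthogonal (QuadraticMap.polarBilin (dotForm F n)) K) ∧
      Set.BijOn (fun W => K ⊔ W)
        {W : Submodule F (Fin n → F) |
          W ≤ LinearMap.BilinForm.orthogonal (QuadraticMap.polarBilin (dotForm F n)) K ∧ IsDotSub F n (h - k) W}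
        {H : Submodule F (Fin n → F) | IsDotSub F n h H ∧ K ≤ H} :=
  dot_h_containing_dot_k_bijection_general n k h hkh F hq K hK
end
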